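/- Let Π_{1,2}(x) denote the number of positive integers n ≤ x such that the image of B_n(t) under the coefficientwise reduction map ℤ[t] → (ℤ/2ℤ)[t] equals \sum_{i=0}^{e(n)} t^i, where e(n) = deg B_n(t). Then for every natural number x ≥ 1, Π_{1,2}(x) ≥ ⌊log₂ x⌋. -/

import Mathlib

open Polynomial

/-- The Stern polynomials: `B 0 = 0`, `B 1 = 1`, `B (2n) = t * B n`,
`B (2n+1) = B n + B (n+1)`. -/
noncomputable def sternPoly : ℕ → Polynomial ℤ
  | 0 => 0
  | 1 => 1
  | n + 2 =>
    if h : (n + 2) % 2 = 0 then X * sternPoly ((n + 2) / 2)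
    else sternPoly ((n + 2) / 2) + sternPoly ((n + 2) / 2 + 1)
decreasing_by all_goals omega

lemma stern_odd (n : ℕ) (hn : 1 ≤ n) :
    sternPoly (2 * n + 1) = sternPoly n + sternPoly (n + 1) := by
  obtain ⟨m, rfl⟩ : ∃ m, n = m + 1 := ⟨n - 1, by omega⟩
  rw [show 2 * (m + 1) + 1 = (2 * m + 1) + 2 by ring, sternPoly]
  have : (2 * m + 1 + 2) % 2 = 1 := by omega
  simp [this]
  congr 1 <;> congr 1 <;> omega

lemma stern_even (n : ℕ) (hn : 1 ≤ n) :
    sternPoly (2 * n) = X * sternPoly n := by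
  obtain ⟨m, rfl⟩ : ∃ m, n = m + 1 := ⟨n - 1, by omega⟩
  rw [show 2 * (m + 1) = 2 * m + 2 by ring, sternPoly]
  have : (2 * m + 2) % 2 = 0 := by omega
  simp [this]

lemma stern_pow (k : ℕ) : sternPoly (2 ^ k) = X ^ k := by
  induction k with
  | zero => simp [sternPoly]
  | succ k ih =>
    rw [pow_succ, mul_comm, stern_even _ (Nat.one_le_two_pow), ih, pow_succ]
    ring

lemma stern_geom (k : ℕ) (hk : 1 ≤ k) :
    sternPoly (2 ^ k - 1) = ∑ i ∈ Finset.range k, (X : Polynomial ℤ) ^ i := by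
  induction k with
  | zero => omega
  | succ k ih =>
    rcases Nat.eq_or_lt_of_le hk with h | h
    · simp [← h, sternPoly]
    have hk1 : 1 ≤ k := by omega
    have h2 : (1:ℕ) ≤ 2 ^ k - 1 := by
      have := Nat.one_lt_two_pow_iff.mpr (by omega : k ≠ 0); omega
    have e : 2 ^ (k+1) - 1 = 2 * (2 ^ k - 1) + 1 := by
      have := Nat.one_le_two_pow (n := k); omega
    rw [e, stern_odd _ h2, show 2 ^ k - 1 + 1 = 2 ^ k by
      have := Nat.one_le_two_pow (n := k); omega, stern_pow, ih hk1,
      Finset.sum_range_succ]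

lemma natDegree_geom (k : ℕ) (hk : 1 ≤ k) :
    (∑ i ∈ Finset.range k, (X : Polynomial ℤ) ^ i).natDegree = k - 1 := by
  apply le_antisymm
  · apply Polynomial.natDegree_sum_le_of_forall_le
    intro i hi
    simp only [natDegree_X_pow]
    exact Nat.le_sub_one_of_lt (Finset.mem_range.mp hi)
  · apply le_natDegree_of_ne_zero
    simp only [finset_sum_coeff, coeff_X_pow]
    rw [Finset.sum_ite_eq (Finset.range k) (k-1) (fun _ => (1:ℤ))]
    simp only [Finset.mem_range, if_pos (by omega : k - 1 < k)]
    exact one_ne_zero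

open scoped Classical in
theorem lower_bound_Pi12 (x : ℕ) (hx : 1 ≤ x) :
    Nat.log 2 x ≤
      ((Finset.Icc 1 x).filter
        (fun n => (sternPoly n).map (Int.castRingHom (ZMod 2)) =
          ∑ i ∈ Finset.range ((sternPoly n).natDegree + 1),
            (X : Polynomial (ZMod 2)) ^ i)).card := by
  have key := Finset.card_le_card_of_injOn (f := fun k => 2 ^ k - 1)
    (s := Finset.Icc 1 (Nat.log 2 x))
    (t := (Finset.Icc 1 x).filter
        (fun n => (sternPoly n).map (Int.castRingHom (ZMod 2)) =
          ∑ i ∈ Finset.range ((sternPoly n).natDegree + 1),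
            (X : Polynomial (ZMod 2)) ^ i))
    ?_ ?_
  · simpa using key
  · intro k hk
    simp only [Finset.mem_coe, Finset.mem_Icc] at hk
    have hk1 : 1 ≤ k := hk.1
    have hpow : 2 ^ k ≤ x := Nat.pow_log_le_self 2 (by omega) |>.trans' <|
      Nat.pow_le_pow_right (by norm_num) hk.2
    have h2 : (1:ℕ) < 2 ^ k := Nat.one_lt_two_pow_iff.mpr (by omega)
    show 2 ^ k - 1 ∈ _
    rw [Finset.mem_coe, Finset.mem_filter, Finset.mem_Icc]
    refine ⟨⟨by omega, by omega⟩, ?_⟩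
    rw [stern_geom k hk1, natDegree_geom k hk1,
      show k - 1 + 1 = k by omega, Polynomial.map_sum]
    refine Finset.sum_congr rfl fun i _ => ?_
    rw [Polynomial.map_pow, Polynomial.map_X]
  · intro a _ b _ hab
    simp only at hab
    have : 2 ^ a = 2 ^ b := by
      have := Nat.one_le_two_pow (n := a); have := Nat.one_le_two_pow (n := b)
      omega
    exact Nat.pow_right_injective le_rfl this
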